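/- arXiv:1908.07426 — 5 statements merged into one kernel-verified Lean document; each statement's English description precedes it below -/
import Mathlib

section
/- There is no isometry U : H_I → H_A ⊗ H_B with dim H_I = d ≥ 2 such that both partial traces Tr_B(UρU†) and Tr_A(UρU†) are constant (independent of the input density matrix ρ). (No-masking theorem for isometries.) -/
open Matrix Complex BigOperators
open scoped Kronecker ComplexOrder

noncomputable section

/-- von Neumann entropy (natural logarithm) via eigenvalues, when Hermitian. -/
def vNE {n : Type*} [Fintype n] [DecidableEq n] (ρ : Matrix n n ℂ) : ℝ :=
  if h : ρ.IsHermitian then ∑ i, Real.negMulLog (h.eigenvalues i) else 0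

/-- density matrix -/
def IsDensity {n : Type*} [Fintype n] (ρ : Matrix n n ℂ) : Prop :=
  ρ.PosSemidef ∧ ρ.trace = 1

/-- rank-one projector |ψ⟩⟨ψ| -/
def pureState {n : Type*} (ψ : n → ℂ) : Matrix n n ℂ :=
  fun i j => ψ i * star (ψ j)

/-- partial trace over the second tensor factor -/
def ptrB {a b : Type*} [Fintype b] (M : Matrix (a × b) (a × b) ℂ) : Matrix a a ℂ :=
  fun i j => ∑ k, M (i, k) (j, k)

/-- partial trace over the first tensor factor -/
def ptrA {a b : Type*} [Fintype a] (M : Matrix (a × b) (a × b) ℂ) : Matrix b b ℂ :=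
  fun i j => ∑ k, M (k, i) (k, j)

/-- marginal on R of a tripartite state on R ⊗ A ⊗ B -/
def margR {R A B : Type*} [Fintype A] [Fintype B]
    (τ : Matrix (R × A × B) (R × A × B) ℂ) : Matrix R R ℂ :=
  fun i j => ∑ a, ∑ b, τ (i, a, b) (j, a, b)

/-- marginal on A -/
def margA {R A B : Type*} [Fintype R] [Fintype B]
    (τ : Matrix (R × A × B) (R × A × B) ℂ) : Matrix A A ℂ :=
  fun i j => ∑ r, ∑ b, τ (r, i, b) (r, j, b)

/-- marginal on B -/
def margB {R A B : Type*} [Fintype R] [Fintype A]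
    (τ : Matrix (R × A × B) (R × A × B) ℂ) : Matrix B B ℂ :=
  fun i j => ∑ r, ∑ a, τ (r, a, i) (r, a, j)

/-- marginal on R ⊗ A -/
def margRA {R A B : Type*} [Fintype B]
    (τ : Matrix (R × A × B) (R × A × B) ℂ) : Matrix (R × A) (R × A) ℂ :=
  fun p q => ∑ b, τ (p.1, p.2, b) (q.1, q.2, b)

/-- marginal on R ⊗ B -/
def margRB {R A B : Type*} [Fintype A]
    (τ : Matrix (R × A × B) (R × A × B) ℂ) : Matrix (R × B) (R × B) ℂ :=
  fun p q => ∑ a, τ (p.1, a, p.2) (q.1, a, q.2)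

/-- quantum mutual information I(R:A) = S(R) + S(A) - S(RA) -/
def IRA {R A B : Type*} [Fintype R] [Fintype A] [Fintype B]
    [DecidableEq R] [DecidableEq A]
    (τ : Matrix (R × A × B) (R × A × B) ℂ) : ℝ :=
  vNE (margR τ) + vNE (margA τ) - vNE (margRA τ)

/-- quantum mutual information I(R:B) = S(R) + S(B) - S(RB) -/
def IRB {R A B : Type*} [Fintype R] [Fintype A] [Fintype B]
    [DecidableEq R] [DecidableEq B]
    (τ : Matrix (R × A × B) (R × A × B) ℂ) : ℝ :=
  vNE (margR τ) + vNE (margB τ) - vNE (margRB τ)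

end

/-! Write the columns `uᵢ = U eᵢ` as matrices `Xᵢ : A → B → ℂ`; the two marginals of
`U |eᵢ⟩⟨eⱼ| U†` are `Xᵢ Xⱼᴴ` and `(Xⱼᴴ Xᵢ)ᵀ`. By polarization `|e₀⟩⟨e₁|` is a combination of
density matrices with coefficients summing to zero, so masking forces `X₀ X₁ᴴ = 0`, while
comparing the inputs `|e₀⟩⟨e₀|` and `|e₁⟩⟨e₁|` forces `X₀ᴴ X₀ = X₁ᴴ X₁`. Then
`(X₀ X₀ᴴ)² = X₀ X₁ᴴ X₁ X₀ᴴ = 0`, hence `X₀ = 0`, contradicting `‖u₀‖ = 1`. -/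

section PartialTrace

variable {a b : Type*}

theorem ptrB_vecMulVec_star [Fintype b] (u v : a × b → ℂ) :
    ptrB (vecMulVec u (star v)) = of (Function.curry u) * (of (Function.curry v))ᴴ := by
  ext i j
  simp [ptrB, vecMulVec_apply, mul_apply]

theorem ptrA_vecMulVec_star [Fintype a] (u v : a × b → ℂ) :
    ptrA (vecMulVec u (star v)) = ((of (Function.curry v))ᴴ * of (Function.curry u))ᵀ := by
  ext i j
  simp [ptrA, vecMulVec_apply, mul_apply, mul_comm]

def ptrBLinearMap [Fintype b] : Matrix (a × b) (a × b) ℂ →ₗ[ℂ] Matrix a a ℂ where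
  toFun := ptrB
  map_add' M N := by ext; simp [ptrB, Finset.sum_add_distrib]
  map_smul' c M := by ext; simp [ptrB, Finset.mul_sum]

end PartialTrace

theorem eq_zero_of_mul_conjTranspose_eq_zero_of_conjTranspose_mul_self_eq {m n R : Type*}
    [Fintype m] [Fintype n] [PartialOrder R] [NonUnitalRing R] [StarRing R] [StarOrderedRing R]
    [NoZeroDivisors R]
    {X Y : Matrix m n R} (hXY : X * Yᴴ = 0) (hgram : Xᴴ * X = Yᴴ * Y) : X = 0 := by
  have hsq : (X * Xᴴ)ᴴ * (X * Xᴴ) = 0 := calc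
    (X * Xᴴ)ᴴ * (X * Xᴴ) = X * (Xᴴ * X) * Xᴴ := by
      simp only [conjTranspose_mul, conjTranspose_conjTranspose, Matrix.mul_assoc]
    _ = (X * Yᴴ) * (Y * Xᴴ) := by rw [hgram]; simp only [Matrix.mul_assoc]
    _ = 0 := by rw [hXY, Matrix.zero_mul]
  exact self_mul_conjTranspose_eq_zero.mp (conjTranspose_mul_self_eq_zero.mp hsq)

theorem isDensity_inv_smul_vecMulVec {n : Type*} [Fintype n] {v : n → ℂ} (hv : v ≠ 0) :
    IsDensity ((v ⬝ᵥ star v)⁻¹ • vecMulVec v (star v)) := by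
  have hpos : 0 ≤ (v ⬝ᵥ star v)⁻¹ := inv_nonneg.mpr (dotProduct_self_star_nonneg v)
  refine ⟨(posSemidef_vecMulVec_self_star v).smul hpos, ?_⟩
  rw [trace_smul, trace_vecMulVec, smul_eq_mul,
    inv_mul_cancel₀ (dotProduct_self_star_eq_zero.not.mpr hv)]

theorem isDensity_vecMulVec_single {n : Type*} [Fintype n] [DecidableEq n] (i : n) :
    IsDensity (vecMulVec (Pi.single i 1 : n → ℂ) (star (Pi.single i 1))) := by
  simpa using isDensity_inv_smul_vecMulVec (v := (Pi.single i 1 : n → ℂ)) (by simp)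

theorem vecMulVec_star_polarization {n : Type*} (x y : n → ℂ) :
    (4 : ℂ) • vecMulVec x (star y) =
      ∑ k ∈ Finset.range 4, I ^ k • vecMulVec (x + I ^ k • y) (star (x + I ^ k • y)) := by
  ext p q
  simp only [Matrix.smul_apply, Matrix.sum_apply, vecMulVec_apply, Finset.sum_range_succ,
    Finset.sum_range_zero, Pi.add_apply, Pi.smul_apply, Pi.star_apply, star_add, star_smul,
    star_pow, smul_eq_mul, RCLike.star_def, conj_I]
  grind [I_sq]

theorem mul_vecMulVec_star_mul_conjTranspose {m n : Type*} [Fintype n] (U : Matrix m n ℂ)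
    (x y : n → ℂ) : U * vecMulVec x (star y) * Uᴴ = vecMulVec (U *ᵥ x) (star (U *ᵥ y)) := by
  rw [mul_vecMulVec, vecMulVec_mul, star_mulVec]

theorem eq_zero_of_ptrB_eq_zero_of_ptrA_eq {a b : Type*} [Fintype a] [Fintype b]
    {u v : a × b → ℂ} (hB : ptrB (vecMulVec u (star v)) = 0)
    (hA : ptrA (vecMulVec u (star u)) = ptrA (vecMulVec v (star v))) : u = 0 := by
  rw [ptrB_vecMulVec_star] at hB
  rw [ptrA_vecMulVec_star, ptrA_vecMulVec_star, transpose_inj] at hA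
  have := eq_zero_of_mul_conjTranspose_eq_zero_of_conjTranspose_mul_self_eq hB hA
  funext p
  exact congr_fun₂ this p.1 p.2

section ConstantOnDensity

variable {n M : Type*} [Fintype n] [AddCommGroup M] [Module ℂ M]
  (L : Matrix n n ℂ →ₗ[ℂ] M) {σ : M}

theorem LinearMap.map_vecMulVec_self_star_of_isDensity (hL : ∀ ρ, IsDensity ρ → L ρ = σ)
    (v : n → ℂ) :
    L (vecMulVec v (star v)) = (v ⬝ᵥ star v) • σ := by
  rcases eq_or_ne v 0 with rfl | hv
  · simp
  rw [← hL _ (isDensity_inv_smul_vecMulVec hv), map_smul, smul_inv_smul₀]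
  exact dotProduct_self_star_eq_zero.not.mpr hv

theorem LinearMap.map_vecMulVec_single_of_isDensity [DecidableEq n]
    (hL : ∀ ρ, IsDensity ρ → L ρ = σ) {i j : n} (hij : i ≠ j) :
    L (vecMulVec (Pi.single i 1) (star (Pi.single j 1))) = 0 := by
  have hnorm : ∀ k : ℕ, (Pi.single i 1 + I ^ k • Pi.single j 1 : n → ℂ) ⬝ᵥ
      star (Pi.single i 1 + I ^ k • Pi.single j 1) = 2 := by
    intro k
    norm_num [dotProduct_add, hij, hij.symm, ← mul_pow]
  have hI : ∑ k ∈ Finset.range 4, I ^ k = 0 := by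
    simp [Finset.sum_range_succ, pow_succ]
  have h4 : (4 : ℂ) • L (vecMulVec (Pi.single i 1) (star (Pi.single j 1))) = 0 := by
    rw [← map_smul, vecMulVec_star_polarization, map_sum]
    simp only [map_smul, L.map_vecMulVec_self_star_of_isDensity hL, hnorm, ← Finset.sum_smul,
      hI, zero_smul]
  exact (smul_eq_zero.mp h4).resolve_left four_ne_zero

end ConstantOnDensity

theorem no_masking_isometry_general
    {A B : Type*} [Fintype A] [Fintype B]
    (d : ℕ) (hd : 2 ≤ d)
    (U : Matrix (A × B) (Fin d) ℂ) (hU : Uᴴ * U = 1) :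
    ¬ ∃ (σA : Matrix A A ℂ) (σB : Matrix B B ℂ),
        ∀ ρ : Matrix (Fin d) (Fin d) ℂ, IsDensity ρ →
          ptrB (U * ρ * Uᴴ) = σA ∧ ptrA (U * ρ * Uᴴ) = σB := by
  rintro ⟨σA, σB, h⟩
  let i₀ : Fin d := ⟨0, by omega⟩
  let i₁ : Fin d := ⟨1, by omega⟩
  have hne : i₀ ≠ i₁ := by simp [i₀, i₁, Fin.ext_iff]
  have hconj (i j : Fin d) :
      U * vecMulVec (Pi.single i 1 : Fin d → ℂ) (star (Pi.single j 1)) * Uᴴ =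
        vecMulVec (U.col i) (star (U.col j)) := by
    rw [mul_vecMulVec_star_mul_conjTranspose, mulVec_single_one, mulVec_single_one]
  have hB : ptrB (vecMulVec (U.col i₀) (star (U.col i₁))) = 0 := by
    rw [← hconj]
    exact (ptrBLinearMap ∘ₗ mulRightLinearMap _ ℂ Uᴴ ∘ₗ mulLeftLinearMap _ ℂ U)
      |>.map_vecMulVec_single_of_isDensity (fun ρ hρ => (h ρ hρ).1) hne
  have hA : ptrA (vecMulVec (U.col i₀) (star (U.col i₀))) =
      ptrA (vecMulVec (U.col i₁) (star (U.col i₁))) := by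
    rw [← hconj, ← hconj, (h _ (isDensity_vecMulVec_single i₀)).2,
      (h _ (isDensity_vecMulVec_single i₁)).2]
  have hcol : U.col i₀ ≠ 0 := by
    intro h0
    have hzero (p : A × B) : U p i₀ = 0 := congr_fun h0 p
    simpa [mul_apply, hzero] using congr_fun₂ hU i₀ i₀
  exact hcol (eq_zero_of_ptrB_eq_zero_of_ptrA_eq hB hA)

/-- No-masking theorem for isometries: no isometry U : H_I → H_A ⊗ H_B
(dim H_I = d ≥ 2) has both partial traces constant on density matrices. -/
theorem no_masking_isometry
    {A B : Type*} [Fintype A] [Fintype B] [DecidableEq A] [DecidableEq B]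
    (d : ℕ) (hd : 2 ≤ d)
    (U : Matrix (A × B) (Fin d) ℂ) (hU : Uᴴ * U = 1) :
    ¬ ∃ (σA : Matrix A A ℂ) (σB : Matrix B B ℂ),
        ∀ ρ : Matrix (Fin d) (Fin d) ℂ, IsDensity ρ →
          ptrB (U * ρ * Uᴴ) = σA ∧ ptrA (U * ρ * Uᴴ) = σB :=
  no_masking_isometry_general d hd U hU
end

section
/- For density matrices ρ_i and a probability distribution {p_i}, the von Neumann entropy satisfies S(Σ_i p_i ρ_i) ≤ H({p_i}) + Σ_i p_i S(ρ_i), where H is the Shannon entropy of {p_i}. -/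
open Matrix Complex BigOperators
open scoped Kronecker ComplexOrder

/-!
Diagonalising every `ρ i` writes `∑ i, p i • ρ i` as an ensemble `∑ a, r a • |φ a⟩⟨φ a|` of unit
vectors with weights `r (i, k) = p i * λᵢₖ`, and the chain rule for Shannon entropy turns `H(r)`
into `H(p) + ∑ i, p i * S(ρ i)`. So it suffices to show `S(σ) ≤ H(r)` for such an ensemble `σ`.
If `σ` has eigenvalues `μ k` and eigenbasis `v k`, the array `c a k = r a * ‖⟪φ a, v k⟫‖²` has
column sums `μ k` and row sums `r a`, and Bessel's inequality for the pairwise orthogonal columns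
`k ↦ (√(r a) * ⟪φ a, v k⟫)ₐ` gives `∑ k, c a k / μ k ≤ 1`. Concavity of `negMulLog` then yields
`H(μ) ≤ H(r)`.
-/

open scoped InnerProductSpace

namespace Real

theorem sum_mul_negMulLog_le_negMulLog_sum {ι : Type*} [Fintype ι] {w x : ι → ℝ}
    (hw : ∀ i, 0 ≤ w i) (hw1 : ∑ i, w i ≤ 1) (hx : ∀ i, 0 ≤ x i) :
    ∑ i, w i * negMulLog (x i) ≤ negMulLog (∑ i, w i * x i) := by
  -- put the missing mass `1 - ∑ w` on the point `0`, where `negMulLog` vanishes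
  have h := concaveOn_negMulLog.le_map_sum (t := Finset.univ)
    (w := fun o : Option ι => o.elim (1 - ∑ i, w i) w) (p := fun o => o.elim 0 x)
    (by rintro (_ | i) _ <;> simp [hw, hw1]) (by simp [Fintype.sum_option])
    (by rintro (_ | i) _ <;> simp [hx])
  simpa [Fintype.sum_option] using h

theorem sum_negMulLog_sum_le_sum_negMulLog_sum {α κ : Type*} [Fintype α] [Fintype κ]
    {c : α → κ → ℝ} (hc : ∀ a k, 0 ≤ c a k)
    (hrow : ∀ a, ∑ k, c a k / ∑ b, c b k ≤ 1) :
    ∑ k, negMulLog (∑ a, c a k) ≤ ∑ a, negMulLog (∑ k, c a k) := by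
  set col := fun k => ∑ a, c a k
  have hcol : ∀ k, 0 ≤ col k := fun k => Finset.sum_nonneg fun a _ => hc a k
  have hc_eq : ∀ a k, c a k / col k * col k = c a k := by
    intro a k
    rcases (hcol k).eq_or_lt with h | h
    · rw [← h, mul_zero, eq_comm]
      exact (Finset.sum_eq_zero_iff_of_nonneg fun b _ => hc b k).1 h.symm a (Finset.mem_univ a)
    · exact div_mul_cancel₀ _ h.ne'
  calc ∑ k, negMulLog (col k)
      = ∑ k, ∑ a, c a k / col k * negMulLog (col k) := by
        refine Finset.sum_congr rfl fun k _ => ?_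
        rw [← Finset.sum_mul, ← Finset.sum_div]
        rcases (hcol k).eq_or_lt with h | h
        · simp [← h]
        · rw [div_self h.ne', one_mul]
    _ = ∑ a, ∑ k, c a k / col k * negMulLog (col k) := Finset.sum_comm
    _ ≤ ∑ a, negMulLog (∑ k, c a k / col k * col k) :=
        Finset.sum_le_sum fun a _ => sum_mul_negMulLog_le_negMulLog_sum
          (fun k => div_nonneg (hc a k) (hcol k)) (hrow a) hcol
    _ = ∑ a, negMulLog (∑ k, c a k) := by simp only [hc_eq]

theorem sum_negMulLog_mul_left {ι : Type*} [Fintype ι] (p : ℝ) {q : ι → ℝ}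
    (hq : ∑ i, q i = 1) :
    ∑ i, negMulLog (p * q i) = negMulLog p + p * ∑ i, negMulLog (q i) := by
  simp only [negMulLog_mul, Finset.sum_add_distrib, ← Finset.sum_mul, ← Finset.mul_sum, hq,
    one_mul]

end Real

theorem sum_sq_norm_inner_div_sq_norm_le {𝕜 E ι : Type*} [RCLike 𝕜] [NormedAddCommGroup E]
    [InnerProductSpace 𝕜 E] [Fintype ι] {u : ι → E}
    (hu : Pairwise fun j k => ⟪u j, u k⟫_𝕜 = 0) (x : E) :
    ∑ k, ‖⟪u k, x⟫_𝕜‖ ^ 2 / ‖u k‖ ^ 2 ≤ ‖x‖ ^ 2 := by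
  classical
  set e : {k // u k ≠ 0} → E := fun k => (‖u k‖⁻¹ : 𝕜) • u k
  have he : Orthonormal 𝕜 e := by
    refine ⟨fun k => ?_, fun j k hjk => ?_⟩
    · simp [e, norm_smul, inv_mul_cancel₀ (norm_ne_zero_iff.2 k.2)]
    · simp [e, inner_smul_left, inner_smul_right, hu (Subtype.coe_ne_coe.2 hjk)]
  calc ∑ k, ‖⟪u k, x⟫_𝕜‖ ^ 2 / ‖u k‖ ^ 2
      = ∑ k : {k // u k ≠ 0}, ‖⟪e k, x⟫_𝕜‖ ^ 2 := by
        rw [← Finset.sum_filter_of_ne (p := fun k => u k ≠ 0) fun k _ h hk => by simp [hk] at h,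
          ← Finset.sum_subtype_eq_sum_filter, Finset.subtype_univ]
        simp [e, inner_smul_left, norm_mul, div_eq_mul_inv, mul_pow, mul_comm]
    _ ≤ ‖x‖ ^ 2 := he.sum_inner_products_le x

theorem Matrix.sum_sq_norm_div_le_one_of_isDiag {𝕜 α κ : Type*} [RCLike 𝕜] [Fintype α]
    [Fintype κ] {B : Matrix α κ 𝕜} (hB : (Bᴴ * B).IsDiag) (a : α) :
    ∑ k, ‖B a k‖ ^ 2 / ∑ b, ‖B b k‖ ^ 2 ≤ 1 := by
  classical
  set u : κ → EuclideanSpace 𝕜 α := fun k => WithLp.toLp 2 (Bᵀ k)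
  have hu : Pairwise fun j k => ⟪u j, u k⟫_𝕜 = 0 := fun j k hjk => by
    simpa [u, Matrix.mul_apply, EuclideanSpace.inner_toLp_toLp, dotProduct, mul_comm] using
      hB hjk
  simpa [u, EuclideanSpace.inner_single_right, EuclideanSpace.norm_sq_eq] using
    sum_sq_norm_inner_div_sq_norm_le hu (EuclideanSpace.single a 1)

theorem pureState_eq_vecMulVec {n : Type*} (ψ : n → ℂ) :
    pureState ψ = Matrix.vecMulVec ψ (star ψ) :=
  rfl

theorem star_dotProduct_pureState_mulVec {n : Type*} [Fintype n] (ψ x y : EuclideanSpace ℂ n) :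
    star ⇑x ⬝ᵥ (pureState ⇑ψ *ᵥ ⇑y) = ⟪x, ψ⟫_ℂ * ⟪ψ, y⟫_ℂ := by
  rw [pureState_eq_vecMulVec]
  simp [vecMulVec_mulVec, EuclideanSpace.inner_eq_star_dotProduct, dotProduct_comm, mul_comm]

namespace Matrix

variable {n : Type*} [Fintype n] [DecidableEq n] {A : Matrix n n ℂ}

theorem IsHermitian.star_eigenvectorBasis_dotProduct (hA : A.IsHermitian) (j k : n) :
    star ⇑(hA.eigenvectorBasis j) ⬝ᵥ ⇑(hA.eigenvectorBasis k) = if j = k then 1 else 0 := by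
  rw [dotProduct_comm, ← EuclideanSpace.inner_eq_star_dotProduct,
    orthonormal_iff_ite.1 hA.eigenvectorBasis.orthonormal]

theorem IsHermitian.star_eigenvectorBasis_dotProduct_mulVec (hA : A.IsHermitian) (j k : n) :
    star ⇑(hA.eigenvectorBasis j) ⬝ᵥ (A *ᵥ ⇑(hA.eigenvectorBasis k)) =
      if j = k then (hA.eigenvalues k : ℂ) else 0 := by
  rw [hA.mulVec_eigenvectorBasis, dotProduct_smul, hA.star_eigenvectorBasis_dotProduct]
  split_ifs <;> simp

theorem IsHermitian.eq_sum_smul_pureState (hA : A.IsHermitian) :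
    A = ∑ k, (hA.eigenvalues k : ℂ) • pureState ⇑(hA.eigenvectorBasis k) := by
  refine toEuclideanLin.injective <| hA.eigenvectorBasis.toBasis.ext fun j => ?_
  simp only [OrthonormalBasis.coe_toBasis, toLpLin_apply, toEuclideanLin]
  congr 1
  rw [hA.mulVec_eigenvectorBasis, sum_mulVec]
  simp [smul_mulVec, pureState_eq_vecMulVec, vecMulVec_mulVec, hA.star_eigenvectorBasis_dotProduct]

theorem IsHermitian.vNE_eq_sum_negMulLog_eigenvalues (hA : A.IsHermitian) :
    vNE A = ∑ i, Real.negMulLog (hA.eigenvalues i) := dif_pos hA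

theorem IsHermitian.sum_eigenvalues_eq_one (hA : A.IsHermitian) (htr : A.trace = 1) :
    ∑ i, hA.eigenvalues i = 1 := by
  have h := hA.trace_eq_sum_eigenvalues
  rw [htr] at h
  simpa using congrArg Complex.re h.symm

end Matrix

noncomputable def ensembleState {n α : Type*} [Fintype α] (r : α → ℝ)
    (φ : α → EuclideanSpace ℂ n) : Matrix n n ℂ :=
  ∑ a, (r a : ℂ) • pureState ⇑(φ a)

section EnsembleState

variable {n α : Type*} [Fintype n] [Fintype α] (r : α → ℝ) (φ : α → EuclideanSpace ℂ n)

theorem isHermitian_ensembleState : (ensembleState r φ).IsHermitian :=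
  Matrix.isHermitian_iff_isSelfAdjoint.2 <| isSelfAdjoint_sum _ fun a _ =>
    ((Matrix.posSemidef_vecMulVec_self_star _).isHermitian.smul
      (Complex.conj_ofReal (r a)))

theorem star_dotProduct_ensembleState_mulVec (x y : EuclideanSpace ℂ n) :
    star ⇑x ⬝ᵥ (ensembleState r φ *ᵥ ⇑y) =
      ∑ a, (r a : ℂ) * (⟪x, φ a⟫_ℂ * ⟪φ a, y⟫_ℂ) := by
  simp only [ensembleState, Matrix.sum_mulVec, dotProduct_sum, Matrix.smul_mulVec, dotProduct_smul,
    star_dotProduct_pureState_mulVec, smul_eq_mul]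

theorem vNE_ensembleState_le [DecidableEq n] (hr : ∀ a, 0 ≤ r a) (hφ : ∀ a, ‖φ a‖ = 1) :
    vNE (ensembleState r φ) ≤ ∑ a, Real.negMulLog (r a) := by
  have hσ := isHermitian_ensembleState r φ
  set v := hσ.eigenvectorBasis
  -- `Bᴴ * B` is the matrix of the ensemble state in its own eigenbasis
  set B : Matrix α n ℂ := .of fun a k => (√(r a) : ℂ) * ⟪φ a, v k⟫_ℂ
  have hBB j k : (Bᴴ * B) j k = if j = k then (hσ.eigenvalues k : ℂ) else 0 := by
    rw [← hσ.star_eigenvectorBasis_dotProduct_mulVec, star_dotProduct_ensembleState_mulVec,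
      Matrix.mul_apply]
    refine Finset.sum_congr rfl fun a _ => ?_
    have hsqrt : (√(r a) : ℂ) * √(r a) = r a := by exact_mod_cast Real.mul_self_sqrt (hr a)
    simp only [B, Matrix.conjTranspose_apply, Matrix.of_apply, star_mul', Complex.star_def,
      inner_conj_symm, Complex.conj_ofReal]
    linear_combination ⟪v j, φ a⟫_ℂ * ⟪φ a, v k⟫_ℂ * hsqrt
  have hcol k : hσ.eigenvalues k = ∑ a, ‖B a k‖ ^ 2 := by
    have h := hBB k k
    simp only [Matrix.mul_apply, Matrix.conjTranspose_apply, RCLike.star_def, RCLike.conj_mul,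
      if_true] at h
    exact Complex.ofReal_injective (by push_cast; exact h.symm)
  have hrow a : ∑ k, ‖B a k‖ ^ 2 = r a := by
    simp only [B, Matrix.of_apply, norm_mul, mul_pow, ← Finset.mul_sum,
      v.sum_sq_norm_inner_left, hφ]
    simp [hr]
  calc vNE (ensembleState r φ) = ∑ k, Real.negMulLog (∑ a, ‖B a k‖ ^ 2) := by
        simp only [hσ.vNE_eq_sum_negMulLog_eigenvalues, hcol]
    _ ≤ ∑ a, Real.negMulLog (∑ k, ‖B a k‖ ^ 2) :=
        Real.sum_negMulLog_sum_le_sum_negMulLog_sum (fun _ _ => by positivity)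
          (Matrix.sum_sq_norm_div_le_one_of_isDiag fun j k hjk => by simp [hBB, hjk])
    _ = ∑ a, Real.negMulLog (r a) := by simp only [hrow]

end EnsembleState

theorem entropy_mixing_upper_bound_general
    {n m : Type*} [Fintype n] [DecidableEq n] [Fintype m]
    (p : m → ℝ) (hp : ∀ i, 0 ≤ p i)
    (ρ : m → Matrix n n ℂ) (hρ : ∀ i, IsDensity (ρ i)) :
    vNE (∑ i, (p i : ℂ) • ρ i) ≤
      (∑ i, Real.negMulLog (p i)) + ∑ i, p i * vNE (ρ i) := by
  have hρH i : (ρ i).IsHermitian := (hρ i).1.isHermitian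
  set r : m × n → ℝ := fun x => p x.1 * (hρH x.1).eigenvalues x.2
  have hr x : 0 ≤ r x := mul_nonneg (hp x.1) ((hρ x.1).1.eigenvalues_nonneg x.2)
  have hmix :
      ∑ i, (p i : ℂ) • ρ i = ensembleState r fun x => (hρH x.1).eigenvectorBasis x.2 := by
    simp only [r, ensembleState, Fintype.sum_prod_type, Complex.ofReal_mul, mul_smul,
      ← Finset.smul_sum, ← (hρH _).eq_sum_smul_pureState]
  calc vNE (∑ i, (p i : ℂ) • ρ i) ≤ ∑ x, Real.negMulLog (r x) :=
        hmix ▸ vNE_ensembleState_le _ _ hr fun x => (hρH x.1).eigenvectorBasis.norm_eq_one x.2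
    _ = ∑ i, (Real.negMulLog (p i) + p i * vNE (ρ i)) := by
        simp only [r, Fintype.sum_prod_type, (hρH _).vNE_eq_sum_negMulLog_eigenvalues,
          Real.sum_negMulLog_mul_left _ ((hρH _).sum_eigenvalues_eq_one (hρ _).2)]
    _ = _ := Finset.sum_add_distrib

/-- Mixing entropy upper bound: S(Σ pᵢ ρᵢ) ≤ H({pᵢ}) + Σ pᵢ S(ρᵢ). -/
theorem entropy_mixing_upper_bound
    {n m : Type*} [Fintype n] [DecidableEq n] [Fintype m]
    (p : m → ℝ) (hp : ∀ i, 0 ≤ p i) (hp1 : ∑ i, p i = 1)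
    (ρ : m → Matrix n n ℂ) (hρ : ∀ i, IsDensity (ρ i)) :
    vNE (∑ i, (p i : ℂ) • ρ i) ≤
      (∑ i, Real.negMulLog (p i)) + ∑ i, p i * vNE (ρ i) :=
  entropy_mixing_upper_bound_general p hp ρ hρ
end

section
/- Let {|a_j⟩}_{j=1..d} and {|b_j⟩}_{j=1..d} be orthonormal bases of d-dimensional spaces H_A, H_B. If |M⟩ ∈ H_A ⊗ H_B is a unit vector such that the value |Σ_j e^{iθ_j} ⟨M|(|a_j⟩ ⊗ |b_j⟩)|² is independent of the phases θ_j ∈ [−π,π] for every choice of local orthonormal bases {|a_j⟩}, {|b_j⟩}, then |M⟩ is a product vector. -/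
open Matrix Complex BigOperators
open scoped Kronecker ComplexOrder

/-!
Take both local bases to be permutations of the standard basis, so that the overlaps
`⟨M|a_j ⊗ b_j⟩` are the conjugated entries `M (j, τ j)`. Rotating the phases of a block `s` of
overlaps by `π` and by `π/2` leaves `|z + w|` unchanged (`z`, `w` the sums over `s` and its
complement) only if `z = 0` or `w = 0`. The blocks `{j}`, `{k}`, `{j, k}` then force
`M (r, p) * M (s, q) = 0` whenever `r ≠ s` and `p ≠ q`, so every `2 × 2` minor of `M` vanishes
and `M` has rank at most one.
-/

open ComplexConjugate

theorem eq_zero_or_eq_zero_of_norm_neg_add_eq_of_norm_I_mul_add_eq {z w : ℂ}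
    (hneg : ‖-z + w‖ = ‖z + w‖) (hI : ‖I * z + w‖ = ‖z + w‖) : z = 0 ∨ w = 0 := by
  have expand : ∀ u : ℂ, ‖u + w‖ = ‖z + w‖ → normSq u = normSq z →
      (u * conj w).re = (z * conj w).re := by
    intro u hu hn
    have hsq := congrArg (· ^ 2) hu
    simp only [Complex.sq_norm, normSq_add, hn] at hsq
    linarith
  have hre := expand _ hneg (normSq_neg z)
  have him := expand _ hI (by rw [normSq_mul, normSq_I, one_mul])
  simp only [neg_mul, neg_re, mul_assoc, I_mul_re] at hre him
  have hprod : z * conj w = 0 :=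
    Complex.ext (by rw [zero_re]; linarith) (by rw [zero_im]; linarith)
  simpa using hprod

theorem sum_exp_ite_mul {ι : Type*} [Fintype ι] [DecidableEq ι] (c : ι → ℂ) (s : Finset ι)
    (t : ℝ) :
    ∑ m, exp (((if m ∈ s then t else 0 : ℝ) : ℂ) * I) * c m
      = exp (t * I) * ∑ m ∈ s, c m + ∑ m ∈ sᶜ, c m := by
  simp only [apply_ite (fun x : ℝ => exp ((x : ℂ) * I)), ofReal_zero, zero_mul, exp_zero, ite_mul,
    one_mul]
  rw [Finset.sum_ite, Finset.mul_sum, Finset.filter_mem_eq_inter, Finset.univ_inter,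
    Finset.filter_notMem_eq_sdiff, Finset.compl_eq_univ_sdiff]

def PhaseInvariant {ι : Type*} [Fintype ι] (c : ι → ℂ) : Prop :=
  ∀ θ : ι → ℝ, (∀ m, θ m ∈ Set.Icc (-Real.pi) Real.pi) →
    ‖∑ m, exp (θ m * I) * c m‖ = ‖∑ m, c m‖

namespace PhaseInvariant

variable {ι : Type*} [Fintype ι] [DecidableEq ι] {c : ι → ℂ}

theorem sum_eq_zero_or_sum_compl_eq_zero (hc : PhaseInvariant c) (s : Finset ι) :
    ∑ m ∈ s, c m = 0 ∨ ∑ m ∈ sᶜ, c m = 0 := by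
  have rotate : ∀ t ∈ Set.Icc (-Real.pi) Real.pi,
      ‖exp (t * I) * ∑ m ∈ s, c m + ∑ m ∈ sᶜ, c m‖ = ‖∑ m ∈ s, c m + ∑ m ∈ sᶜ, c m‖ := by
    intro t ht
    rw [← sum_exp_ite_mul, Finset.sum_add_sum_compl]
    refine hc _ fun m => ?_
    split_ifs
    · exact ht
    · exact ⟨neg_nonpos.2 Real.pi_nonneg, Real.pi_nonneg⟩
  have hπ := rotate Real.pi ⟨by linarith [Real.pi_pos], le_rfl⟩
  have hπ2 := rotate (Real.pi / 2) ⟨by linarith [Real.pi_pos], by linarith [Real.pi_pos]⟩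
  rw [exp_pi_mul_I, neg_one_mul] at hπ
  rw [ofReal_div, ofReal_ofNat, exp_pi_div_two_mul_I] at hπ2
  exact eq_zero_or_eq_zero_of_norm_neg_add_eq_of_norm_I_mul_add_eq hπ hπ2

theorem mul_eq_zero (hc : PhaseInvariant c) {j k : ι} (hjk : j ≠ k) : c j * c k = 0 := by
  have hsum : ∀ s : Finset ι, ∑ m ∈ s, c m = 0 ∨ ∑ m, c m = ∑ m ∈ s, c m := fun s =>
    (hc.sum_eq_zero_or_sum_compl_eq_zero s).imp id fun h => by
      rw [← Finset.sum_add_sum_compl s, h, add_zero]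
  have hj := hsum {j}
  have hk := hsum {k}
  have hpair := hsum {j, k}
  simp only [Finset.sum_singleton, Finset.sum_pair hjk] at hj hk hpair
  obtain h | hSj := hj
  · rw [h, zero_mul]
  obtain h | hSk := hk
  · rw [h, mul_zero]
  have hS : ∑ m, c m = 0 := by
    rcases hpair with h | h
    · linear_combination (hSj + hSk + h) / 2
    · linear_combination hSj + hSk - h
  rw [← hSj, ← hSk, hS, mul_zero]

end PhaseInvariant

theorem sum_star_single_mul_single {ι α R : Type*} [DecidableEq ι] [Fintype α] [DecidableEq α]
    [Semiring R] [StarRing R] {σ : ι → α} (hσ : Function.Injective σ) (j k : ι) :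
    ∑ x, star ((Pi.single (σ j) 1 : α → R) x) * (Pi.single (σ k) 1 : α → R) x =
      if j = k then 1 else 0 := by
  simp [Pi.single_apply, hσ.eq_iff, eq_comm, apply_ite star]

theorem sum_star_mul_single_mul_single {α β R : Type*} [Fintype α] [Fintype β] [DecidableEq α]
    [DecidableEq β] [Semiring R] [Star R] (M : α × β → R) (a : α) (b : β) :
    ∑ x, star (M x) * ((Pi.single a 1 : α → R) x.1 * (Pi.single b 1 : β → R) x.2) =
      star (M (a, b)) := by
  simp [Fintype.sum_prod_type, Pi.single_apply]

theorem exists_eq_mul_of_mul_eq_mul {α β K : Type*} [Field K] (M : α × β → K)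
    (hM : ∀ r s p q, M (r, p) * M (s, q) = M (r, q) * M (s, p)) :
    ∃ (u : α → K) (v : β → K), ∀ x, M x = u x.1 * v x.2 := by
  by_cases hzero : ∀ x, M x = 0
  · exact ⟨0, 0, fun x => by simp [hzero x]⟩
  push Not at hzero
  obtain ⟨⟨i₀, j₀⟩, h₀⟩ := hzero
  refine ⟨fun i => M (i, j₀), fun j => M (i₀, j) / M (i₀, j₀), fun ⟨i, j⟩ => ?_⟩
  rw [mul_div_assoc', eq_div_iff h₀, hM]

theorem phase_independent_implies_product_general
    (d : ℕ) (M : Fin d × Fin d → ℂ)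
    (hconst : ∀ a b : Fin d → Fin d → ℂ,
      (∀ j k, ∑ x, star (a j x) * a k x = if j = k then 1 else 0) →
      (∀ j k, ∑ x, star (b j x) * b k x = if j = k then 1 else 0) →
      ∀ θ θ' : Fin d → ℝ, (∀ j, θ j ∈ Set.Icc (-Real.pi) Real.pi) →
        (∀ j, θ' j ∈ Set.Icc (-Real.pi) Real.pi) →
        ‖∑ j, Complex.exp ((θ j : ℂ) * Complex.I) *
          (∑ x, star (M x) * (a j x.1 * b j x.2))‖ ^ 2 =
        ‖∑ j, Complex.exp ((θ' j : ℂ) * Complex.I) *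
          (∑ x, star (M x) * (a j x.1 * b j x.2))‖ ^ 2) :
    ∃ α β : Fin d → ℂ, ∀ x, M x = α x.1 * β x.2 := by
  have hvanish : ∀ r s p q, r ≠ s → p ≠ q → M (r, p) * M (s, q) = 0 := by
    intro r s p q hrs hpq
    obtain ⟨τ, hτ⟩ := Equiv.Perm.exists_extending_pair ![r, s] ![p, q]
      (injective_pair_iff_ne.2 hrs) (injective_pair_iff_ne.2 hpq)
    have hc : PhaseInvariant fun m => star (M (m, τ m)) := by
      intro θ hθ
      have h := hconst (fun m => Pi.single m 1) (fun m => Pi.single (τ m) 1)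
        (sum_star_single_mul_single Function.injective_id)
        (sum_star_single_mul_single τ.injective) θ (fun _ => 0) hθ
        fun _ => ⟨neg_nonpos.2 Real.pi_nonneg, Real.pi_nonneg⟩
      simp only [sum_star_mul_single_mul_single] at h
      simpa [sq_eq_sq₀] using h
    have hp : τ r = p := hτ 0
    have hq : τ s = q := hτ 1
    simpa [hp, hq] using hc.mul_eq_zero hrs
  refine exists_eq_mul_of_mul_eq_mul M fun r s p q => ?_
  rcases eq_or_ne r s with rfl | hrs
  · ring
  rcases eq_or_ne p q with rfl | hpq
  · ring
  rw [hvanish r s p q hrs hpq, hvanish r s q p hrs hpq.symm]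

/-- Schmidt-basis phase argument: if |Σⱼ e^{iθⱼ}⟨M|(aⱼ ⊗ bⱼ)|² is independent
of the phases θⱼ for every pair of local orthonormal bases, then M is a
product vector. -/
theorem phase_independent_implies_product
    (d : ℕ) (hd : 2 ≤ d) (M : Fin d × Fin d → ℂ)
    (hM : ∑ x, ‖M x‖ ^ 2 = 1)
    (hconst : ∀ a b : Fin d → Fin d → ℂ,
      (∀ j k, ∑ x, star (a j x) * a k x = if j = k then 1 else 0) →
      (∀ j k, ∑ x, star (b j x) * b k x = if j = k then 1 else 0) →
      ∀ θ θ' : Fin d → ℝ, (∀ j, θ j ∈ Set.Icc (-Real.pi) Real.pi) →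
        (∀ j, θ' j ∈ Set.Icc (-Real.pi) Real.pi) →
        ‖∑ j, Complex.exp ((θ j : ℂ) * Complex.I) *
          (∑ x, star (M x) * (a j x.1 * b j x.2))‖ ^ 2 =
        ‖∑ j, Complex.exp ((θ' j : ℂ) * Complex.I) *
          (∑ x, star (M x) * (a j x.1 * b j x.2))‖ ^ 2) :
    ∃ α β : Fin d → ℂ, ∀ x, M x = α x.1 * β x.2 :=
  phase_independent_implies_product_general d M hconst
end

section
/- For d ≥ 2 there is no orthonormal basis {|M_k⟩}_{k=1..d²} of C^d ⊗ C^d such that every maximally entangled state |Ψ⟩ (i.e., every unit vector whose both marginals are maximally mixed) has constant diagonal elements |⟨M_k|Ψ⟩|² = 1/d² for all k. (Counterexample to the disk conjecture of Modi et al.) -/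
open Matrix Complex BigOperators
open scoped Kronecker ComplexOrder

/-- A maximally entangled state of C^d ⊗ C^d. -/
def IsMaxEnt (d : ℕ) (Ψ : Fin d × Fin d → ℂ) : Prop :=
  ∃ a b : Fin d → Fin d → ℂ,
    (∀ j k, ∑ x, star (a j x) * a k x = if j = k then 1 else 0) ∧
    (∀ j k, ∑ x, star (b j x) * b k x = if j = k then 1 else 0) ∧
    ∀ x, Ψ x = ((Real.sqrt d : ℂ))⁻¹ * ∑ j, a j x.1 * b j x.2

/-!
For a unitary `U`, the vector `Ψ_U = d^{-1/2} Σ_{ij} U_{ij} |i⟩|j⟩` is maximally entangled and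
`⟨N|Ψ_U⟩ = d^{-1/2} Σ_{ij} star N_{ij} U_{ij}`. So a vector `N` of a disk basis has
`|Σ star N_{ij} U_{ij}|² = 1/d` for every unitary `U`. Taking for `U` permutation matrices with
arbitrary phases shows that two nonzero entries of `N` always share a row or a column, so `N` is
supported on a single row or column. Completing that normalised row or column to a unitary `U`
gives `|Σ star N_{ij} U_{ij}|² = ‖N‖² = 1`, which is not `1/d` once `d ≥ 2`.
-/

open Finset

theorem eq_of_ne_zero_of_forall_norm_sum_mul_phase {ι : Type*} [Fintype ι] [DecidableEq ι]
    (c : ι → ℂ) (r : ℝ)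
    (h : ∀ φ : ι → ℂ, (∀ x, ‖φ x‖ = 1) → ‖∑ x, c x * φ x‖ ^ 2 = r)
    {i p : ι} (hi : c i ≠ 0) (hp : c p ≠ 0) : i = p := by
  set S := ∑ x, ‖c x‖
  have hsigned : ∀ ε : ι → ℝ, (∀ x, |ε x| = 1) → (∑ x, ε x * ‖c x‖) ^ 2 = r := by
    intro ε hε
    have hrot : ∀ x, c x * (ε x * exp (-(arg (c x) * I))) = ((ε x * ‖c x‖ : ℝ) : ℂ) := by
      intro x
      calc c x * (ε x * exp (-(arg (c x) * I)))
          = ‖c x‖ * exp (arg (c x) * I) * (ε x * exp (-(arg (c x) * I))) := by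
            rw [norm_mul_exp_arg_mul_I]
        _ = ((ε x * ‖c x‖ : ℝ) : ℂ) := by
            rw [mul_mul_mul_comm, ← Complex.exp_add, add_neg_cancel, exp_zero, mul_one]
            push_cast
            ring
    have hunit : ∀ x, ‖(ε x : ℂ) * exp (-(arg (c x) * I))‖ = 1 := fun x => by
      simp [norm_exp, hε]
    simpa only [hrot, ← Complex.ofReal_sum, Complex.norm_real, Real.norm_eq_abs, sq_abs]
      using h _ hunit
  have hS : S ^ 2 = r := by simpa using hsigned 1 (by simp)
  have hflip : ∀ j, ‖c j‖ = 0 ∨ ‖c j‖ = S := by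
    intro j
    have hsum : ∑ x, (if x = j then -1 else 1) * ‖c x‖ = S - 2 * ‖c j‖ := by
      have : ∀ x, (if x = j then -1 else 1) * ‖c x‖ = ‖c x‖ - 2 * if x = j then ‖c x‖ else 0 :=
        fun x => by split_ifs <;> ring
      simp only [this, sum_sub_distrib, ← mul_sum, sum_ite_eq', mem_univ, if_true, S]
    have := hsigned (fun x => if x = j then -1 else 1) fun x => by split_ifs <;> simp
    rw [hsum, ← hS] at this
    have : ‖c j‖ * (‖c j‖ - S) = 0 := by linear_combination this / 4
    rcases mul_eq_zero.mp this with h0 | h0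
    · exact Or.inl h0
    · exact Or.inr (sub_eq_zero.mp h0)
  by_contra hip
  have hpair : ‖c i‖ + ‖c p‖ ≤ S := by
    rw [← sum_pair (f := fun x => ‖c x‖) hip]
    exact sum_le_sum_of_subset_of_nonneg (subset_univ _) fun x _ _ => norm_nonneg _
  have hi' := (hflip i).resolve_left (norm_ne_zero_iff.mpr hi)
  have hp' := (hflip p).resolve_left (norm_ne_zero_iff.mpr hp)
  linarith [norm_pos_iff.mpr hi]

theorem Equiv.Perm.exists_apply_eq_and_apply_eq {α : Type*} [DecidableEq α] {i p j q : α}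
    (hip : i ≠ p) (hjq : j ≠ q) : ∃ σ : Equiv.Perm α, σ i = j ∧ σ p = q := by
  have hp : Equiv.swap i j p ≠ j := by
    rw [Ne, Equiv.swap_apply_eq_iff, Equiv.swap_apply_right]
    exact hip.symm
  refine ⟨(Equiv.swap i j).trans (Equiv.swap (Equiv.swap i j p) q), ?_, by simp⟩
  simp [Equiv.swap_apply_of_ne_of_ne hp.symm hjq]

theorem forall_fst_eq_or_forall_snd_eq {α β : Type*} {s : Set (α × β)}
    (hs : ∀ x ∈ s, ∀ y ∈ s, x.1 = y.1 ∨ x.2 = y.2) {x₀ : α × β} (hx₀ : x₀ ∈ s) :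
    (∀ x ∈ s, x.1 = x₀.1) ∨ ∀ x ∈ s, x.2 = x₀.2 := by
  by_cases hrow : ∀ x ∈ s, x.1 = x₀.1
  · exact Or.inl hrow
  push Not at hrow
  obtain ⟨x₁, hx₁, hx₁₀⟩ := hrow
  have h₁₀ : x₁.2 = x₀.2 := (hs x₁ hx₁ x₀ hx₀).resolve_left hx₁₀
  refine Or.inr fun x hx => ?_
  rcases hs x hx x₀ hx₀ with h | h
  · rcases hs x hx x₁ hx₁ with h' | h'
    · exact absurd (h'.symm.trans h) hx₁₀
    · exact h'.trans h₁₀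
  · exact h

namespace Matrix

variable {n : Type*} [Fintype n] [DecidableEq n]

theorem diagonal_mem_unitaryGroup {φ : n → ℂ} (hφ : ∀ i, ‖φ i‖ = 1) :
    diagonal φ ∈ unitaryGroup n ℂ := by
  rw [mem_unitaryGroup_iff, star_eq_conjTranspose, diagonal_conjTranspose, diagonal_mul_diagonal,
    ← diagonal_one]
  congr 1
  ext i
  simp [Complex.mul_conj', hφ]

theorem permMatrix_mem_unitaryGroup (σ : Equiv.Perm n) :
    σ.permMatrix ℂ ∈ unitaryGroup n ℂ := by
  rw [mem_unitaryGroup_iff, star_eq_conjTranspose, conjTranspose_permMatrix, ← permMatrix_mul,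
    inv_mul_cancel, permMatrix_one]

theorem exists_mem_unitaryGroup_col_eq (v : EuclideanSpace ℂ n) (hv : ‖v‖ = 1) (j : n) :
    ∃ U ∈ unitaryGroup n ℂ, ∀ i, U i j = v i := by
  have hsingle : Orthonormal ℂ (({j} : Set n).domRestrict fun _ => v) := by
    rw [orthonormal_iff_ite]
    rintro ⟨a, rfl⟩ ⟨b, rfl⟩
    simp [inner_self_eq_norm_sq_to_K, hv]
  obtain ⟨b, hb⟩ := hsingle.exists_orthonormalBasis_extension_of_card_eq (by simp)
  refine ⟨(EuclideanSpace.basisFun n ℂ).toBasis.toMatrix b,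
    (EuclideanSpace.basisFun n ℂ).toMatrix_orthonormalBasis_mem_unitary b, fun i => ?_⟩
  simp [Module.Basis.toMatrix_apply, hb j rfl]

end Matrix

section Overlap

variable {n : Type*} [Fintype n]

def overlap (N : n × n → ℂ) (U : Matrix n n ℂ) : ℂ := ∑ x, star (N x) * U x.1 x.2

theorem overlap_eq_sum_of_col {N : n × n → ℂ} {j₀ : n} (hcol : ∀ x, N x ≠ 0 → x.2 = j₀)
    (U : Matrix n n ℂ) : overlap N U = ∑ i, star (N (i, j₀)) * U i j₀ := by
  rw [overlap, Fintype.sum_prod_type]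
  refine sum_congr rfl fun i _ => sum_eq_single j₀ (fun j _ hj => ?_) (by simp)
  rw [not_ne_iff.mp (mt (hcol (i, j)) hj), star_zero, zero_mul]

theorem overlap_comp_swap (N : n × n → ℂ) (U : Matrix n n ℂ) :
    overlap (N ∘ Prod.swap) U = overlap N Uᵀ :=
  (Equiv.prodComm n n).sum_comp fun x => star (N x) * Uᵀ x.1 x.2

variable [DecidableEq n]

theorem overlap_diagonal_mul_permMatrix (N : n × n → ℂ) (φ : n → ℂ) (σ : Equiv.Perm n) :
    overlap N (diagonal φ * σ.permMatrix ℂ) = ∑ i, star (N (i, σ i)) * φ i := by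
  simp [overlap, Fintype.sum_prod_type]

variable {N : n × n → ℂ} {r : ℝ}

theorem eq_zero_or_eq_zero_of_norm_overlap_const
    (hN : ∀ U ∈ unitaryGroup n ℂ, ‖overlap N U‖ ^ 2 = r) {i p j q : n} (hip : i ≠ p)
    (hjq : j ≠ q) :
    N (i, j) = 0 ∨ N (p, q) = 0 := by
  obtain ⟨σ, rfl, rfl⟩ := Equiv.Perm.exists_apply_eq_and_apply_eq hip hjq
  by_contra! h
  refine hip (eq_of_ne_zero_of_forall_norm_sum_mul_phase (fun x => star (N (x, σ x))) r
    (fun φ hφ => ?_) (star_ne_zero.mpr h.1) (star_ne_zero.mpr h.2))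
  rw [← overlap_diagonal_mul_permMatrix]
  exact hN _ (Submonoid.mul_mem _ (diagonal_mem_unitaryGroup hφ) (permMatrix_mem_unitaryGroup σ))

theorem eq_sum_norm_sq_of_norm_overlap_const_of_col
    (hN : ∀ U ∈ unitaryGroup n ℂ, ‖overlap N U‖ ^ 2 = r)
    {x₀ : n × n} (hx₀ : N x₀ ≠ 0) (hcol : ∀ x, N x ≠ 0 → x.2 = x₀.2) :
    r = ∑ x, ‖N x‖ ^ 2 := by
  set w : EuclideanSpace ℂ n := WithLp.toLp 2 fun i => N (i, x₀.2)
  have hw : w ≠ 0 := fun h => hx₀ (by simpa [w] using congrArg (· x₀.1) h)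
  obtain ⟨U, hU, hUcol⟩ := exists_mem_unitaryGroup_col_eq ((‖w‖ : ℂ)⁻¹ • w)
    (norm_smul_inv_norm hw) x₀.2
  have hover : overlap N U = ‖w‖ := by
    calc overlap N U = inner ℂ w ((‖w‖ : ℂ)⁻¹ • w) := by
          rw [overlap_eq_sum_of_col hcol, PiLp.inner_apply]
          exact sum_congr rfl fun i _ => by rw [hUcol, RCLike.inner_apply, mul_comm]; rfl
      _ = ‖w‖ := by
          rw [inner_smul_right, inner_self_eq_norm_sq_to_K, RCLike.ofReal_eq_complex_ofReal]
          field_simp [norm_ne_zero_iff.mpr hw]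
  have hsum : ∑ x, ‖N x‖ ^ 2 = ‖w‖ ^ 2 := by
    rw [EuclideanSpace.norm_sq_eq, Fintype.sum_prod_type]
    refine sum_congr rfl fun i _ => sum_eq_single x₀.2 (fun j _ hj => ?_) (by simp)
    rw [not_ne_iff.mp (mt (hcol (i, j)) hj), norm_zero, zero_pow two_ne_zero]
  rw [hsum, ← hN U hU, hover, Complex.norm_real, Real.norm_eq_abs, sq_abs]

theorem eq_sum_norm_sq_of_norm_overlap_const
    (hN : ∀ U ∈ unitaryGroup n ℂ, ‖overlap N U‖ ^ 2 = r) : r = ∑ x, ‖N x‖ ^ 2 := by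
  by_cases hzero : ∀ x, N x = 0
  · simpa [overlap, hzero] using (hN 1 (one_mem _)).symm
  push Not at hzero
  obtain ⟨x₀, hx₀⟩ := hzero
  have hsupp := forall_fst_eq_or_forall_snd_eq (s := {x | N x ≠ 0})
    (fun x hx y hy => by
      by_contra! h
      rcases eq_zero_or_eq_zero_of_norm_overlap_const hN h.1 h.2 with h' | h'
      exacts [hx h', hy h']) hx₀
  rcases hsupp with hrow | hcol
  · have hN' : ∀ U ∈ unitaryGroup n ℂ, ‖overlap (N ∘ Prod.swap) U‖ ^ 2 = r := fun U hU =>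
      (overlap_comp_swap N U).symm ▸ hN _ (transpose_mem_unitaryGroup_iff.mpr hU)
    rw [eq_sum_norm_sq_of_norm_overlap_const_of_col hN' (x₀ := x₀.swap) hx₀
      fun x hx => hrow x.swap hx]
    exact (Equiv.prodComm n n).sum_comp fun x => ‖N x‖ ^ 2
  · exact eq_sum_norm_sq_of_norm_overlap_const_of_col hN hx₀ hcol

end Overlap

theorem isMaxEnt_of_mem_unitaryGroup {d : ℕ} {U : Matrix (Fin d) (Fin d) ℂ}
    (hU : U ∈ unitaryGroup (Fin d) ℂ) :
    IsMaxEnt d fun x => ((Real.sqrt d : ℂ))⁻¹ * U x.1 x.2 := by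
  refine ⟨(1 : Matrix (Fin d) (Fin d) ℂ), U, fun j k => by simp [one_apply], fun j k => ?_,
    fun x => by simp [one_apply]⟩
  have h := congr_fun₂ (mem_unitaryGroup_iff.mp hU) k j
  simp only [mul_apply, star_apply, one_apply] at h
  simp_rw [mul_comm (star _), h, eq_comm]

/-- Counterexample to the disk conjecture: for d ≥ 2 there is no orthonormal
basis of C^d ⊗ C^d in which every maximally entangled state has constant
diagonal elements 1/d². -/
theorem no_disk_basis (d : ℕ) (hd : 2 ≤ d) :
    ¬ ∃ M : Fin d × Fin d → (Fin d × Fin d → ℂ),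
        (∀ k l, ∑ x, star (M k x) * M l x = if k = l then 1 else 0) ∧
        ∀ Ψ, IsMaxEnt d Ψ → ∀ k,
          ‖∑ x, star (M k x) * Ψ x‖ ^ 2 = 1 / (d ^ 2 : ℝ) := by
  rintro ⟨M, horth, hconst⟩
  obtain ⟨k⟩ : Nonempty (Fin d × Fin d) := ⟨(⟨0, by omega⟩, ⟨0, by omega⟩)⟩
  have hd' : (2 : ℝ) ≤ d := by exact_mod_cast hd
  have hunit : ∑ x, ‖M k x‖ ^ 2 = 1 := by
    have := horth k k
    simp only [if_true, RCLike.star_def, Complex.conj_mul'] at this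
    exact_mod_cast this
  have hover : ∀ U ∈ unitaryGroup (Fin d) ℂ, ‖overlap (M k) U‖ ^ 2 = 1 / d := by
    intro U hU
    have h := hconst _ (isMaxEnt_of_mem_unitaryGroup hU) k
    simp_rw [mul_left_comm (star (M k _)), ← mul_sum, norm_mul, mul_pow, norm_inv,
      Complex.norm_real, Real.norm_eq_abs, abs_of_nonneg (Real.sqrt_nonneg _), inv_pow,
      Real.sq_sqrt (Nat.cast_nonneg d)] at h
    rw [overlap]
    field_simp at h ⊢
    linarith
  have := eq_sum_norm_sq_of_norm_overlap_const hover
  rw [hunit, div_eq_one_iff_eq (by positivity)] at this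
  linarith
end

section
/- Explicit qudit masker verification: for odd d, define isometries from C^d to C^{2d} ⊗ C^{2d} by M_{A,i}|ψ⟩ = (Z^i|ψ⟩) ⊗ |i+d⟩, M_{B,i}|ψ⟩ = |i+d⟩ ⊗ (Z^i|ψ⟩) for 1 ≤ i ≤ d, and M_j|ψ⟩ = Σ_k α_k |k ⊕ j⟩ ⊗ |k ⊕ 2j⟩ for 1 ≤ j ≤ d−1 (⊕ mod d), where |ψ⟩ = Σ_k α_k|k⟩ and Z|k⟩ = e^{2πik/d}|k⟩. Then the channel Φ(ρ) = Σ_i (1/(d(d+1)))(M_{A,i}ρM_{A,i}† + M_{B,i}ρM_{B,i}†) + Σ_j (1/(d+1)) M_j ρ M_j† has both partial traces constant (independent of ρ). -/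
/-! Each of the isometries sends `|k⟩` to a unimodular multiple of a product vector
`|f k⟩ ⊗ |g k⟩`. Tracing out a factor on which `g` is injective therefore dephases `ρ` and pushes
its diagonal forward along `f`; tracing out the constant factor of `M_{A,i}` (or `M_{B,i}`) leaves
`Z^i ρ Z^{-i}`, and averaging over `i` dephases as well, by orthogonality of the characters of
`ℤ/d`. So every contribution is a combination of the states `∑ k, ρ k k |f k⟩⟨f k|`. Averaging the
shifts `k ↦ k + j` (and `k ↦ k + 2j`, a bijection because `d` is odd) over all `j` spreads `Tr ρ`
uniformly over the lower half of `ℂ^{2d}`; the missing term `j = 0` removes `diag ρ / (d + 1)`,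
which is exactly what the clock-twirled terms contribute, with weight `d / (d (d + 1))`. -/

open Matrix Complex BigOperators
open scoped Kronecker ComplexOrder

/-- embedding of the d-dimensional space into the first half of C^{2d} -/
def lowE {d : ℕ} (k : Fin d) : Fin (2 * d) := ⟨k.val, by have := k.isLt; omega⟩

/-- embedding onto the second half of C^{2d}: |k+d⟩ -/
def highE {d : ℕ} (k : Fin d) : Fin (2 * d) := ⟨k.val + d, by have := k.isLt; omega⟩

/-- M_{A,i}|ψ⟩ = (Z^i|ψ⟩) ⊗ |i+d⟩ -/
noncomputable def MAmat (d : ℕ) (i : Fin d) :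
    Matrix (Fin (2 * d) × Fin (2 * d)) (Fin d) ℂ :=
  fun ab k => if ab.1 = lowE k ∧ ab.2 = highE i then
    Complex.exp (2 * Real.pi * Complex.I * (i : ℕ) * (k : ℕ) / d) else 0

/-- M_{B,i}|ψ⟩ = |i+d⟩ ⊗ (Z^i|ψ⟩) -/
noncomputable def MBmat (d : ℕ) (i : Fin d) :
    Matrix (Fin (2 * d) × Fin (2 * d)) (Fin d) ℂ :=
  fun ab k => if ab.2 = lowE k ∧ ab.1 = highE i then
    Complex.exp (2 * Real.pi * Complex.I * (i : ℕ) * (k : ℕ) / d) else 0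

/-- M_j|ψ⟩ = Σ_k α_k |k ⊕ j⟩ ⊗ |k ⊕ 2j⟩ (⊕ = mod-d sum) -/
def Mjmat (d : ℕ) (j : Fin d) :
    Matrix (Fin (2 * d) × Fin (2 * d)) (Fin d) ℂ :=
  fun ab k => if ab.1 = lowE (k + j) ∧ ab.2 = lowE (k + j + j) then 1 else 0

section PartialTraceLinear

variable {A B : Type*} [Fintype A] [Fintype B]

@[simps]
def ptrBLinear : Matrix (A × B) (A × B) ℂ →ₗ[ℂ] Matrix A A ℂ where
  toFun := ptrB
  map_add' _ _ := by ext; simp [ptrB, Finset.sum_add_distrib]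
  map_smul' _ _ := by ext; simp [ptrB, Finset.mul_sum]

@[simps]
def ptrALinear : Matrix (A × B) (A × B) ℂ →ₗ[ℂ] Matrix B B ℂ where
  toFun := ptrA
  map_add' _ _ := by ext; simp [ptrA, Finset.sum_add_distrib]
  map_smul' _ _ := by ext; simp [ptrA, Finset.mul_sum]

end PartialTraceLinear

section ProductMonomial

variable {K A B : Type*} [Fintype K] [DecidableEq A] [DecidableEq B]

def productMonomial (f : K → A) (g : K → B) (c : K → ℂ) : Matrix (A × B) K ℂ :=
  fun ab k => if ab.1 = f k ∧ ab.2 = g k then c k else 0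

def diagPushforward (f : K → A) (ρ : Matrix K K ℂ) : Matrix A A ℂ :=
  ∑ k, ρ k k • single (f k) (f k) 1

theorem sum_diagPushforward_of_bijective [DecidableEq K] {J : Type*} [Fintype J] (e : K → A)
    (σ : J → K → K) (hσ : ∀ k, Function.Bijective (σ · k)) (ρ : Matrix K K ℂ) :
    ∑ j, diagPushforward (fun k => e (σ j k)) ρ = ρ.trace • diagPushforward e 1 := by
  have hperm : ∀ k, ∑ j, single (e (σ j k)) (e (σ j k)) (1 : ℂ) = ∑ m, single (e m) (e m) 1 :=
    fun k => Fintype.sum_bijective _ (hσ k) _ _ fun _ => rfl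
  simp only [diagPushforward, one_apply_eq, one_smul, trace, diag]
  rw [Finset.sum_comm, Finset.sum_smul]
  simp only [← Finset.smul_sum, hperm]

theorem ptrA_conj_productMonomial [Fintype A] [Fintype B] (f : K → A) (g : K → B) (c : K → ℂ)
    (ρ : Matrix K K ℂ) :
    ptrA (productMonomial f g c * ρ * (productMonomial f g c)ᴴ) =
      ptrB (productMonomial g f c * ρ * (productMonomial g f c)ᴴ) := by
  ext b b'
  simp [ptrA, ptrB, mul_apply, productMonomial, and_comm]

variable [Fintype B]

theorem ptrB_conj_productMonomial (f : K → A) (g : K → B) (c : K → ℂ) (ρ : Matrix K K ℂ) :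
    ptrB (productMonomial f g c * ρ * (productMonomial f g c)ᴴ) =
      ∑ k, ∑ k', if g k = g k' then (c k * ρ k k' * star (c k')) • single (f k) (f k') 1
        else 0 := by
  ext a a'
  simp only [ptrB, mul_apply, conjTranspose_apply, productMonomial, Finset.sum_mul,
    Matrix.sum_apply]
  rw [Finset.sum_comm]
  simp only [Finset.sum_comm (s := (Finset.univ : Finset B)) (t := (Finset.univ : Finset K))]
  rw [Finset.sum_comm]
  refine Finset.sum_congr rfl fun k _ => Finset.sum_congr rfl fun k' _ => ?_
  simp only [@eq_comm _ a, @eq_comm _ a']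
  by_cases hg : g k = g k' <;> by_cases ha : f k = a <;> by_cases ha' : f k' = a' <;>
    simp [hg, ha, ha', Finset.sum_ite_eq']

theorem ptrB_conj_productMonomial_of_injective [DecidableEq K] (f : K → A) {g : K → B}
    (hg : g.Injective) {c : K → ℂ} (hc : ∀ k, c k * star (c k) = 1) (ρ : Matrix K K ℂ) :
    ptrB (productMonomial f g c * ρ * (productMonomial f g c)ᴴ) = diagPushforward f ρ := by
  rw [ptrB_conj_productMonomial]
  simp only [hg.eq_iff]
  simp only [Finset.sum_ite_eq, Finset.mem_univ, if_true,
    mul_right_comm _ (ρ _ _), hc, one_mul, diagPushforward]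

theorem sum_ptrB_conj_productMonomial_const [DecidableEq K] {I : Type*} [Fintype I] (f : K → A)
    (b : I → B) {c : I → K → ℂ} {N : ℂ}
    (hc : ∀ k k', ∑ i, c i k * star (c i k') = if k = k' then N else 0)
    (ρ : Matrix K K ℂ) :
    ∑ i, ptrB (productMonomial f (fun _ => b i) (c i) * ρ *
      (productMonomial f (fun _ => b i) (c i))ᴴ) = N • diagPushforward f ρ := by
  simp only [ptrB_conj_productMonomial, if_true,
    Finset.sum_comm (s := (Finset.univ : Finset I)) (t := (Finset.univ : Finset K)),
    mul_right_comm _ (ρ _ _), ← Finset.sum_smul, ← Finset.sum_mul, hc, ite_mul, zero_mul,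
    ite_smul, zero_smul, Finset.sum_ite_eq, Finset.mem_univ, if_true, diagPushforward,
    Finset.smul_sum, smul_smul]

end ProductMonomial

theorem Complex.star_eq_inv_of_pow_eq_one {z : ℂ} {n : ℕ} (h : z ^ n = 1) (hn : n ≠ 0) :
    star z = z⁻¹ :=
  (Complex.inv_eq_conj (Complex.norm_eq_one_of_pow_eq_one h hn)).symm

theorem IsPrimitiveRoot.sum_pow_mul_star_pow {ω : ℂ} {n : ℕ} (hω : IsPrimitiveRoot ω n)
    {k k' : ℕ} (hk : k < n) (hk' : k' < n) :
    ∑ i ∈ Finset.range n, ω ^ (i * k) * star (ω ^ (i * k')) = if k = k' then (n : ℂ) else 0 := by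
  have hn : n ≠ 0 := by omega
  have hω0 : ω ≠ 0 := hω.ne_zero hn
  set w := ω ^ k / ω ^ k'
  have hterm : ∀ i, ω ^ (i * k) * star (ω ^ (i * k')) = w ^ i := by
    intro i
    rw [Complex.star_eq_inv_of_pow_eq_one (n := n) (by rw [pow_right_comm, hω.pow_eq_one, one_pow])
      hn, div_pow, ← pow_mul, ← pow_mul, mul_comm k, mul_comm k', div_eq_mul_inv]
  simp only [hterm]
  split_ifs with h
  · simp [w, h, div_self (pow_ne_zero _ hω0)]
  · have hw1 : w ≠ 1 := fun h1 =>
      h (hω.pow_inj hk hk' ((div_eq_one_iff_eq (pow_ne_zero _ hω0)).mp h1))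
    have hwn : w ^ n = 1 := by
      rw [div_pow, pow_right_comm, pow_right_comm ω k', hω.pow_eq_one, one_pow, one_pow, div_one]
    rw [geom_sum_eq hw1, hwn, sub_self, zero_div]

theorem Fin.add_self_bijective {d : ℕ} (hodd : Odd d) :
    Function.Bijective (fun j : Fin d => j + j) := by
  refine Finite.injective_iff_bijective.mp fun a b hab => Fin.ext ?_
  have h := congrArg Fin.val hab
  simp only [Fin.val_add_eq_ite] at h
  obtain ⟨m, rfl⟩ := hodd
  split_ifs at h <;> omega

theorem inv_mul_add_one_smul_add_inv_add_one_smul {M : Type*} [AddCommGroup M] [Module ℂ M]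
    {x : ℂ} (hx : x ≠ 0) (D P Q : M) :
    (x * (x + 1))⁻¹ • (x • D + P) + (x + 1)⁻¹ • (Q - D) = (x * (x + 1))⁻¹ • P + (x + 1)⁻¹ • Q := by
  have hweight : (x * (x + 1))⁻¹ * x = (x + 1)⁻¹ := by
    rw [mul_inv, mul_right_comm, inv_mul_cancel₀ hx, one_mul]
  linear_combination (norm := module) hweight • D

section Masker

variable {d : ℕ}

noncomputable def clockPhase (d : ℕ) (i k : Fin d) : ℂ :=
  Complex.exp (2 * Real.pi * Complex.I * (i : ℕ) * (k : ℕ) / d)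

theorem clockPhase_eq_pow (i k : Fin d) :
    clockPhase d i k = Complex.exp (2 * Real.pi * Complex.I / d) ^ ((i : ℕ) * (k : ℕ)) := by
  rw [clockPhase, ← Complex.exp_nat_mul]
  congr 1
  push_cast
  ring

theorem clockPhase_mul_star_self [NeZero d] (i k : Fin d) :
    clockPhase d i k * star (clockPhase d i k) = 1 := by
  have hω := Complex.isPrimitiveRoot_exp d (NeZero.ne d)
  have hpow : clockPhase d i k ^ d = 1 := by
    rw [clockPhase_eq_pow, pow_right_comm, hω.pow_eq_one, one_pow]
  have hne : clockPhase d i k ≠ 0 := Complex.exp_ne_zero _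
  rw [Complex.star_eq_inv_of_pow_eq_one hpow (NeZero.ne d), mul_inv_cancel₀ hne]

theorem sum_clockPhase_mul_star [NeZero d] (k k' : Fin d) :
    ∑ i : Fin d, clockPhase d i k * star (clockPhase d i k') = if k = k' then (d : ℂ) else 0 := by
  simp only [clockPhase_eq_pow]
  rw [Fin.sum_univ_eq_sum_range (fun i => Complex.exp (2 * Real.pi * Complex.I / d) ^ (i * k) *
    star (Complex.exp (2 * Real.pi * Complex.I / d) ^ (i * k'))),
    (Complex.isPrimitiveRoot_exp d (NeZero.ne d)).sum_pow_mul_star_pow k.isLt k'.isLt]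
  simp only [Fin.val_inj]

theorem lowE_injective : Function.Injective (lowE : Fin d → Fin (2 * d)) :=
  fun a b h => Fin.ext (by simpa [lowE] using congrArg Fin.val h)

theorem MAmat_eq (i : Fin d) :
    MAmat d i = productMonomial lowE (fun _ => highE i) (clockPhase d i) := rfl

theorem MBmat_eq (i : Fin d) :
    MBmat d i = productMonomial (fun _ => highE i) lowE (clockPhase d i) := by
  ext ab k
  simp only [MBmat, productMonomial, clockPhase, and_comm]

theorem Mjmat_eq (j : Fin d) :
    Mjmat d j = productMonomial (fun k => lowE (k + j)) (fun k => lowE (k + j + j)) 1 := rfl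

variable [NeZero d] (ρ : Matrix (Fin d) (Fin d) ℂ)

theorem sum_ptrB_conj_MAmat :
    ∑ i, ptrB (MAmat d i * ρ * (MAmat d i)ᴴ) = (d : ℂ) • diagPushforward lowE ρ :=
  sum_ptrB_conj_productMonomial_const lowE highE sum_clockPhase_mul_star ρ

theorem sum_ptrA_conj_MBmat :
    ∑ i, ptrA (MBmat d i * ρ * (MBmat d i)ᴴ) = (d : ℂ) • diagPushforward lowE ρ := by
  simp only [MBmat_eq, ptrA_conj_productMonomial]
  exact sum_ptrB_conj_productMonomial_const lowE highE sum_clockPhase_mul_star ρ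

theorem sum_ptrB_conj_MBmat :
    ∑ i, ptrB (MBmat d i * ρ * (MBmat d i)ᴴ) = ρ.trace • diagPushforward highE 1 := by
  simp only [MBmat_eq, ptrB_conj_productMonomial_of_injective _ lowE_injective
    (clockPhase_mul_star_self _)]
  exact sum_diagPushforward_of_bijective highE (fun i _ => i) (fun _ => Function.bijective_id) ρ

theorem sum_ptrA_conj_MAmat :
    ∑ i, ptrA (MAmat d i * ρ * (MAmat d i)ᴴ) = ρ.trace • diagPushforward highE 1 := by
  simp only [MAmat_eq, ptrA_conj_productMonomial, ptrB_conj_productMonomial_of_injective _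
    lowE_injective (clockPhase_mul_star_self _)]
  exact sum_diagPushforward_of_bijective highE (fun i _ => i) (fun _ => Function.bijective_id) ρ

theorem sum_ptrB_conj_Mjmat :
    ∑ j ∈ Finset.univ.erase 0, ptrB (Mjmat d j * ρ * (Mjmat d j)ᴴ) =
      ρ.trace • diagPushforward lowE 1 - diagPushforward lowE ρ := by
  have hterm : ∀ j, ptrB (Mjmat d j * ρ * (Mjmat d j)ᴴ) =
      diagPushforward (fun k => lowE (k + j)) ρ := fun j =>
    ptrB_conj_productMonomial_of_injective _
      (lowE_injective.comp ((add_left_injective j).comp (add_left_injective j))) (by simp) ρ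
  rw [Finset.sum_erase_eq_sub (Finset.mem_univ 0)]
  simp only [hterm]
  rw [sum_diagPushforward_of_bijective lowE (fun j k => k + j)
    (fun k => AddGroup.addLeft_bijective k)]
  simp only [add_zero]

theorem sum_ptrA_conj_Mjmat (hodd : Odd d) :
    ∑ j ∈ Finset.univ.erase 0, ptrA (Mjmat d j * ρ * (Mjmat d j)ᴴ) =
      ρ.trace • diagPushforward lowE 1 - diagPushforward lowE ρ := by
  have hterm : ∀ j, ptrA (Mjmat d j * ρ * (Mjmat d j)ᴴ) =
      diagPushforward (fun k => lowE (k + j + j)) ρ := fun j => by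
    rw [Mjmat_eq, ptrA_conj_productMonomial]
    exact ptrB_conj_productMonomial_of_injective _
      (lowE_injective.comp (add_left_injective j)) (by simp) ρ
  rw [Finset.sum_erase_eq_sub (Finset.mem_univ 0)]
  simp only [hterm]
  have hbij : ∀ k : Fin d, Function.Bijective (fun j => k + j + j) := fun k => by
    simpa only [Function.comp_def, add_assoc] using
      (AddGroup.addLeft_bijective k).comp (Fin.add_self_bijective hodd)
  rw [sum_diagPushforward_of_bijective lowE (fun j k => k + j + j) hbij]
  simp only [add_zero]

end Masker

theorem explicit_qudit_masker_general (d : ℕ) [NeZero d] (hodd : Odd d) :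
    ∃ (σA σB : Matrix (Fin (2 * d)) (Fin (2 * d)) ℂ),
      ∀ ρ : Matrix (Fin d) (Fin d) ℂ, IsDensity ρ →
        ptrB (∑ i : Fin d, ((d : ℂ) * ((d : ℂ) + 1))⁻¹ •
                (MAmat d i * ρ * (MAmat d i)ᴴ + MBmat d i * ρ * (MBmat d i)ᴴ) +
              ∑ j ∈ Finset.univ.erase (0 : Fin d), ((d : ℂ) + 1)⁻¹ •
                (Mjmat d j * ρ * (Mjmat d j)ᴴ)) = σA ∧
        ptrA (∑ i : Fin d, ((d : ℂ) * ((d : ℂ) + 1))⁻¹ •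
                (MAmat d i * ρ * (MAmat d i)ᴴ + MBmat d i * ρ * (MBmat d i)ᴴ) +
              ∑ j ∈ Finset.univ.erase (0 : Fin d), ((d : ℂ) + 1)⁻¹ •
                (Mjmat d j * ρ * (Mjmat d j)ᴴ)) = σB := by
  have hd : (d : ℂ) ≠ 0 := Nat.cast_ne_zero.mpr (NeZero.ne d)
  let σ := ((d : ℂ) * ((d : ℂ) + 1))⁻¹ • diagPushforward highE (1 : Matrix (Fin d) (Fin d) ℂ) +
    ((d : ℂ) + 1)⁻¹ • diagPushforward lowE (1 : Matrix (Fin d) (Fin d) ℂ)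
  refine ⟨σ, σ, fun ρ hρ => ⟨?_, ?_⟩⟩
  · simp only [← ptrBLinear_apply, map_add, map_sum, map_smul]
    simp only [ptrBLinear_apply, ← Finset.smul_sum, Finset.sum_add_distrib]
    rw [sum_ptrB_conj_MAmat, sum_ptrB_conj_MBmat, sum_ptrB_conj_Mjmat, hρ.2, one_smul, one_smul]
    exact inv_mul_add_one_smul_add_inv_add_one_smul hd _ _ _
  · simp only [← ptrALinear_apply, map_add, map_sum, map_smul]
    simp only [ptrALinear_apply, ← Finset.smul_sum, Finset.sum_add_distrib]
    rw [sum_ptrA_conj_MAmat, sum_ptrA_conj_MBmat, sum_ptrA_conj_Mjmat ρ hodd, hρ.2, one_smul,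
      one_smul, add_comm (diagPushforward highE 1)]
    exact inv_mul_add_one_smul_add_inv_add_one_smul hd _ _ _

/-- The explicit qudit masker (odd d): the random application of the
bipartite embeddings M_{A,i}, M_{B,i} (probability 1/(d(d+1)) each) and M_j
(probability 1/(d+1) each) has constant partial traces. -/
theorem explicit_qudit_masker (d : ℕ) [NeZero d] (hodd : Odd d) (hd : 3 ≤ d) :
    ∃ (σA σB : Matrix (Fin (2 * d)) (Fin (2 * d)) ℂ),
      ∀ ρ : Matrix (Fin d) (Fin d) ℂ, IsDensity ρ →
        ptrB (∑ i : Fin d, ((d : ℂ) * ((d : ℂ) + 1))⁻¹ •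
                (MAmat d i * ρ * (MAmat d i)ᴴ + MBmat d i * ρ * (MBmat d i)ᴴ) +
              ∑ j ∈ Finset.univ.erase (0 : Fin d), ((d : ℂ) + 1)⁻¹ •
                (Mjmat d j * ρ * (Mjmat d j)ᴴ)) = σA ∧
        ptrA (∑ i : Fin d, ((d : ℂ) * ((d : ℂ) + 1))⁻¹ •
                (MAmat d i * ρ * (MAmat d i)ᴴ + MBmat d i * ρ * (MBmat d i)ᴴ) +
              ∑ j ∈ Finset.univ.erase (0 : Fin d), ((d : ℂ) + 1)⁻¹ •
                (Mjmat d j * ρ * (Mjmat d j)ᴴ)) = σB :=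
  explicit_qudit_masker_general d hodd
end
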